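/- arXiv:2002.06253 — 2 statements merged into one kernel-verified Lean document; each statement's English description precedes it below -/
import Mathlib

section
/- Suppose b ∈ ℝ^m satisfies |b(i)| ≤ 1 for all i and b(1) ≥ b(2) ≥ … ≥ b(m). Then the supervertex q* = Σ_{i=0}^m b'(i)·e_{μ_i} lies in P(b) and is a vertex (extreme point) of P(b). -/
/-!
The supervertex is supported on the chain `μ_0, …, μ_m`. For `x` supported on this chain,
`⟨ℓ_n, x⟩ = Σ_j x(μ_j) - 2 Σ_{j<n} x(μ_j)`, so the equations of `P(b)` say exactly that the
partial sums `Σ_{j<n} x(μ_j)` equal `Σ_{j<n} b'(j) = (1 - b(n))/2`; hence such an `x` is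
determined by `b`, and `q*` is a solution, nonnegative because `b` extended by `b(0) = 1`,
`b(m+1) = -1` is antitone. A point of `P(b)` on an open segment through `q*` vanishes
wherever `q*` does (all points of `P(b)` are nonnegative), so it lies on the chain and is `q*`.
-/

open Finset

/-- The value λ(k) for λ ∈ Λ = {0,1}^m, extended by the conventions λ(0) = 0 and
λ(m+1) = 1 (positions 1,…,m carry the actual values of λ). -/
def lamExt (m : ℕ) (lam : Fin m → Bool) (k : ℕ) : ℕ :=
  if h : 1 ≤ k ∧ k ≤ m then (if lam ⟨k - 1, by omega⟩ then 1 else 0)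
  else if k = 0 then 0 else 1

/-- The vector ℓ_i ∈ ℝ^Λ, ℓ_i(λ) = (−1)^{λ(i)}, for 0 ≤ i ≤ m. -/
def ell (m : ℕ) (i : ℕ) (lam : Fin m → Bool) : ℝ := (-1) ^ lamExt m lam i

/-- The standard inner product on ℝ^Λ. -/
def ip (m : ℕ) (x y : (Fin m → Bool) → ℝ) : ℝ := ∑ lam : Fin m → Bool, x lam * y lam

/-- The polytope P(b). -/
def Pb (m : ℕ) (b : ℕ → ℝ) : Set ((Fin m → Bool) → ℝ) :=
  {x | ip m (ell m 0) x = 1 ∧ (∀ i ∈ Finset.Icc 1 m, ip m (ell m i) x = b i) ∧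
    ∀ lam, 0 ≤ x lam}

/-- b extended by the conventions b(0) = 1 and b(m+1) = −1. -/
noncomputable def bext (m : ℕ) (b : ℕ → ℝ) (k : ℕ) : ℝ :=
  if k = 0 then 1 else if k ≤ m then b k else -1

/-- b'(i) = (b(i) − b(i+1))/2 for 0 ≤ i ≤ m. -/
noncomputable def b' (m : ℕ) (b : ℕ → ℝ) (i : ℕ) : ℝ :=
  (bext m b i - bext m b (i + 1)) / 2

/-- μ_i ∈ Λ: μ_i(k) = 0 for k ≤ i, μ_i(k) = 1 for k ≥ i+1. -/
def mu (m i : ℕ) : Fin m → Bool := fun k => decide (i ≤ (k : ℕ))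

/-- The supervertex q* = Σ_{i=0}^m b'(i)·e_{μ_i} (decreasing case). -/
noncomputable def supervertexDec (m : ℕ) (b : ℕ → ℝ) : (Fin m → Bool) → ℝ :=
  fun lam => ∑ i ∈ Finset.range (m + 1), b' m b i * (if lam = mu m i then 1 else 0)

lemma Set.mem_extremePoints_of_nonneg_of_forall_eq {ι : Type*} {A : Set (ι → ℝ)}
    (hA : ∀ y ∈ A, 0 ≤ y) {x : ι → ℝ} (hx : x ∈ A)
    (huniq : ∀ y ∈ A, (∀ i, x i = 0 → y i = 0) → y = x) :
    x ∈ A.extremePoints ℝ := by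
  refine ⟨hx, fun y hy z hz ⟨a, c, ha, hc, _, hxyz⟩ => huniq y hy fun i hxi => ?_⟩
  have hsum : a * y i + c * z i = 0 := by
    simpa [← hxyz] using hxi
  have hay := ((add_eq_zero_iff_of_nonneg (mul_nonneg ha.le (hA y hy i))
    (mul_nonneg hc.le (hA z hz i))).mp hsum).1
  exact (mul_eq_zero.mp hay).resolve_left ha.ne'

lemma eq_of_forall_sum_range_eq {M : Type*} [AddCommGroup M] {f g : ℕ → M} {N : ℕ}
    (h : ∀ n ≤ N, ∑ j ∈ range n, f j = ∑ j ∈ range n, g j) {i : ℕ} (hi : i < N) :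
    f i = g i := by
  rw [← sum_range_succ_sub_sum f, ← sum_range_succ_sub_sum g, h i hi.le, h (i + 1) hi]

section Supervertex

variable {m : ℕ}

lemma mu_ne_of_lt {i j : ℕ} (hij : i < j) (hj : j ≤ m) : mu m i ≠ mu m j := by
  intro h
  have := congrFun h ⟨i, by omega⟩
  simp only [mu, le_refl, decide_true, true_eq_decide_iff] at this
  omega

lemma mu_injOn : Set.InjOn (mu m) (range (m + 1)) := by
  intro i hi j hj h
  simp only [coe_range, Set.mem_Iio] at hi hj
  by_contra hne
  rcases Nat.lt_or_gt_of_ne hne with hlt | hlt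
  · exact mu_ne_of_lt hlt (by omega) h
  · exact mu_ne_of_lt hlt (by omega) h.symm

def muChain (m : ℕ) : Finset (Fin m → Bool) := (range (m + 1)).image (mu m)

lemma ell_zero_apply (lam : Fin m → Bool) : ell m 0 lam = 1 := by
  simp [ell, lamExt]

lemma ell_mu {n : ℕ} (j : ℕ) (h1 : 1 ≤ n) (h2 : n ≤ m) :
    ell m n (mu m j) = if j < n then -1 else 1 := by
  have hmu : mu m j ⟨n - 1, by omega⟩ = decide (j < n) := by
    simp only [mu, decide_eq_decide]
    omega
  rw [ell, lamExt, dif_pos ⟨h1, h2⟩, hmu]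
  split_ifs <;> simp_all

lemma ip_eq_sum_mu {x : (Fin m → Bool) → ℝ} (hx : ∀ lam ∉ muChain m, x lam = 0)
    (y : (Fin m → Bool) → ℝ) :
    ip m y x = ∑ j ∈ range (m + 1), y (mu m j) * x (mu m j) := by
  rw [ip, ← sum_subset (subset_univ (muChain m)) fun lam _ h => by rw [hx lam h, mul_zero],
    muChain, sum_image mu_injOn]

lemma ip_ell_eq_of_chain {x : (Fin m → Bool) → ℝ} (hx : ∀ lam ∉ muChain m, x lam = 0)
    {n : ℕ} (h1 : 1 ≤ n) (h2 : n ≤ m) :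
    ip m (ell m n) x = ip m (ell m 0) x - 2 * ∑ j ∈ range n, x (mu m j) := by
  simp only [ip_eq_sum_mu hx, ell_zero_apply, ell_mu _ h1 h2, one_mul]
  rw [← sum_range_add_sum_Ico _ (show n ≤ m + 1 by omega),
    ← sum_range_add_sum_Ico (fun j => x (mu m j)) (show n ≤ m + 1 by omega)]
  have hlow : ∑ j ∈ range n, (if j < n then (-1 : ℝ) else 1) * x (mu m j)
      = -∑ j ∈ range n, x (mu m j) := by
    rw [← sum_neg_distrib]
    exact sum_congr rfl fun j hj => by simp [mem_range.mp hj]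
  have hhigh : ∑ j ∈ Ico n (m + 1), (if j < n then (-1 : ℝ) else 1) * x (mu m j)
      = ∑ j ∈ Ico n (m + 1), x (mu m j) :=
    sum_congr rfl fun j hj => by simp [not_lt.mpr (mem_Ico.mp hj).1]
  rw [hlow, hhigh]
  ring

lemma bext_zero (b : ℕ → ℝ) : bext m b 0 = 1 := by
  simp [bext]

lemma bext_of_le (b : ℕ → ℝ) {n : ℕ} (h1 : 1 ≤ n) (h2 : n ≤ m) : bext m b n = b n := by
  rw [bext, if_neg (by omega), if_pos h2]

lemma bext_of_lt (b : ℕ → ℝ) {n : ℕ} (h : m < n) : bext m b n = -1 := by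
  rw [bext, if_neg (by omega), if_neg (by omega)]

lemma sum_range_b' (b : ℕ → ℝ) (n : ℕ) :
    ∑ j ∈ range n, b' m b j = (1 - bext m b n) / 2 := by
  simp only [b']
  rw [← sum_div, sum_range_sub', bext_zero]

lemma bext_antitone {b : ℕ → ℝ} (hb : ∀ i ∈ Icc 1 m, |b i| ≤ 1)
    (hdec : ∀ i j, 1 ≤ i → i ≤ j → j ≤ m → b j ≤ b i) : Antitone (bext m b) := by
  have hb' : ∀ k, 1 ≤ k → k ≤ m → -1 ≤ b k ∧ b k ≤ 1 := fun k h1 h2 =>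
    abs_le.mp (hb k (mem_Icc.mpr ⟨h1, h2⟩))
  refine antitone_nat_of_succ_le fun n => ?_
  rcases Nat.lt_or_ge m (n + 1) with hm | hm
  · rw [bext_of_lt b hm]
    rcases Nat.eq_zero_or_pos n with rfl | hn
    · rw [bext_zero]; norm_num
    · rcases Nat.lt_or_ge m n with hmn | hmn
      · rw [bext_of_lt b hmn]
      · rw [bext_of_le b hn hmn]; exact (hb' n hn hmn).1
  · rw [bext_of_le b (by omega) hm]
    rcases Nat.eq_zero_or_pos n with rfl | hn
    · rw [bext_zero]; exact (hb' 1 le_rfl hm).2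
    · rw [bext_of_le b hn (by omega)]; exact hdec n (n + 1) hn (by omega) hm

lemma mem_Pb_iff_of_chain {b : ℕ → ℝ} {x : (Fin m → Bool) → ℝ}
    (hx : ∀ lam ∉ muChain m, x lam = 0) :
    x ∈ Pb m b ↔ (∀ n ≤ m + 1, ∑ j ∈ range n, x (mu m j) = ∑ j ∈ range n, b' m b j) ∧
      ∀ lam, 0 ≤ x lam := by
  have htot : ip m (ell m 0) x = ∑ j ∈ range (m + 1), x (mu m j) := by
    simp only [ip_eq_sum_mu hx, ell_zero_apply, one_mul]
  have hlast : ∑ j ∈ range (m + 1), b' m b j = 1 := by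
    rw [sum_range_b', bext_of_lt b (Nat.lt_succ_self m)]; norm_num
  have hmid : ∀ n, 1 ≤ n → n ≤ m → ∑ j ∈ range n, b' m b j = (1 - b n) / 2 := fun n h1 h2 => by
    rw [sum_range_b', bext_of_le b h1 h2]
  simp only [Pb, Set.mem_ofPred_eq, mem_Icc, ← and_assoc]
  refine and_congr_left' ⟨fun ⟨h0, hn⟩ n hnm => ?_, fun h => ⟨?_, fun n ⟨h1, h2⟩ => ?_⟩⟩
  · rcases Nat.eq_zero_or_pos n with rfl | hpos
    · simp
    rcases hnm.eq_or_lt with rfl | hlt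
    · rw [← htot, h0, hlast]
    · have := hn n ⟨hpos, by omega⟩
      rw [ip_ell_eq_of_chain hx hpos (by omega), h0] at this
      rw [hmid n hpos (by omega)]
      linarith
  · rw [htot, h (m + 1) le_rfl, hlast]
  · rw [ip_ell_eq_of_chain hx h1 h2, htot, h (m + 1) le_rfl, h n (by omega), hlast,
      hmid n h1 h2]
    ring

lemma supervertexDec_mu (b : ℕ → ℝ) {i : ℕ} (hi : i ≤ m) :
    supervertexDec m b (mu m i) = b' m b i := by
  rw [supervertexDec, sum_eq_single_of_mem i (mem_range.mpr (by omega))]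
  · simp
  · intro j hj hne
    rw [if_neg fun h => hne (mu_injOn hj (mem_range.mpr (by omega) : i ∈ range (m + 1)) h.symm),
      mul_zero]

lemma supervertexDec_of_notMem_muChain (b : ℕ → ℝ) {lam : Fin m → Bool}
    (h : lam ∉ muChain m) : supervertexDec m b lam = 0 :=
  sum_eq_zero fun i hi => by
    rw [if_neg fun he => h (mem_image.mpr ⟨i, hi, he.symm⟩), mul_zero]

lemma eq_supervertexDec_of_chain {b : ℕ → ℝ} {x : (Fin m → Bool) → ℝ} (hxP : x ∈ Pb m b)
    (hx : ∀ lam ∉ muChain m, x lam = 0) : x = supervertexDec m b := by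
  have hsums := ((mem_Pb_iff_of_chain hx).mp hxP).1
  funext lam
  by_cases hlam : lam ∈ muChain m
  · obtain ⟨i, hi, rfl⟩ := mem_image.mp hlam
    rw [supervertexDec_mu b (Nat.lt_succ_iff.mp (mem_range.mp hi))]
    exact eq_of_forall_sum_range_eq hsums (mem_range.mp hi)
  · rw [hx lam hlam, supervertexDec_of_notMem_muChain b hlam]

lemma supervertexDec_mem_Pb {b : ℕ → ℝ} (hb : ∀ i ∈ Icc 1 m, |b i| ≤ 1)
    (hdec : ∀ i j, 1 ≤ i → i ≤ j → j ≤ m → b j ≤ b i) : supervertexDec m b ∈ Pb m b := by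
  refine (mem_Pb_iff_of_chain fun _ => supervertexDec_of_notMem_muChain b).mpr
    ⟨fun n hn => sum_congr rfl fun j hj => supervertexDec_mu b (by have := mem_range.mp hj; omega),
      fun lam => sum_nonneg fun i _ => mul_nonneg ?_ (by split_ifs <;> norm_num)⟩
  exact div_nonneg (sub_nonneg.mpr (bext_antitone hb hdec (Nat.le_succ i))) zero_le_two

end Supervertex

/-- If |b(i)| ≤ 1 for all i and b is decreasing, the supervertex q* lies in P(b)
and is a vertex (extreme point) of P(b). -/
theorem stmt9 (m : ℕ) (b : ℕ → ℝ) (hb : ∀ i ∈ Finset.Icc 1 m, |b i| ≤ 1)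
    (hdec : ∀ i j, 1 ≤ i → i ≤ j → j ≤ m → b j ≤ b i) :
    supervertexDec m b ∈ Pb m b ∧
      supervertexDec m b ∈ Set.extremePoints ℝ (Pb m b) := by
  have hmem := supervertexDec_mem_Pb hb hdec
  refine ⟨hmem, Set.mem_extremePoints_of_nonneg_of_forall_eq (fun y hy => hy.2.2) hmem
    fun y hy hsupp => eq_supervertexDec_of_chain hy fun lam hlam => ?_⟩
  exact hsupp lam (supervertexDec_of_notMem_muChain b hlam)
end

section
/- If b ∈ ℝ^m is decreasing with |b(i)| ≤ 1 for all i, and σ is a permutation of {1,…,m} with σ_*(b) = b, then σ_*(q*) = q* where q* is the supervertex of P(b). -/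
/-!
For `0 < i < m` the coefficient `b'(i)` vanishes unless `b` drops strictly between positions
`i` and `i + 1`. At such a drop the set `{k ≥ i}` on which `μ_i` is `1` is a sublevel set of the
antitone `b`, hence is preserved by every permutation fixing `b`; so `μ_i ∘ σ = μ_i`. For `i = 0`
and `i = m` the vertex `μ_i` is constant. Hence each term of `q*` is fixed by `σ_*`.
-/

open Finset

/-- The induced action σ_*(x)(λ) = x(λ∘σ) on ℝ^Λ. -/
def act (m : ℕ) (σ : Equiv.Perm (Fin m)) (x : (Fin m → Bool) → ℝ) :
    (Fin m → Bool) → ℝ := fun lam => x (lam ∘ σ)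

theorem Antitone.le_iff_apply_le_of_covBy {α β : Type*} [LinearOrder α] [Preorder β]
    {f : α → β} (hf : Antitone f) {a c : α} (hac : a ⋖ c) (hlt : f c < f a) (x : α) :
    c ≤ x ↔ f x ≤ f c := by
  refine ⟨fun h => hf h, fun h => ?_⟩
  by_contra hxc
  exact (hlt.trans_le (hf (hac.le_of_lt (not_le.mp hxc)))).not_ge h

theorem Antitone.le_perm_apply_iff {α β : Type*} [LinearOrder α] [Preorder β]
    {f : α → β} (hf : Antitone f) {σ : Equiv.Perm α} (hσ : ∀ x, f (σ x) = f x)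
    {a c : α} (hac : a ⋖ c) (hlt : f c < f a) (x : α) :
    c ≤ σ x ↔ c ≤ x := by
  rw [hf.le_iff_apply_le_of_covBy hac hlt, hf.le_iff_apply_le_of_covBy hac hlt, hσ]

theorem mu_comp_perm {m i : ℕ} {σ : Equiv.Perm (Fin m)}
    (h : ∀ k : Fin m, i ≤ (σ k : ℕ) ↔ i ≤ (k : ℕ)) : mu m i ∘ σ = mu m i := by
  funext k
  simp only [Function.comp_apply, mu, h]

theorem b'_eq_zero_or_mu_comp_perm {m i : ℕ} {b : ℕ → ℝ}
    (hdec : ∀ i j, 1 ≤ i → i ≤ j → j ≤ m → b j ≤ b i) {σ : Equiv.Perm (Fin m)}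
    (hσ : ∀ k : Fin m, b ((σ k : ℕ) + 1) = b ((k : ℕ) + 1)) :
    b' m b i = 0 ∨ mu m i ∘ σ = mu m i := by
  by_cases hi : i = 0 ∨ m ≤ i
  · refine .inr (mu_comp_perm fun k => ?_)
    have := (σ k).isLt
    have := k.isLt
    omega
  rcases (hdec i (i + 1) (by omega) (by omega) (by omega)).eq_or_lt with heq | hlt
  · left
    rw [b', bext, bext, if_neg (by omega), if_pos (by omega), if_neg (by omega),
      if_pos (by omega), heq, sub_self, zero_div]
  · right
    have hf : Antitone fun k : Fin m => b ((k : ℕ) + 1) := fun k l hkl =>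
      hdec _ _ (by omega) (by simpa using hkl) (by omega)
    have hcov : (⟨i - 1, by omega⟩ : Fin m) ⋖ ⟨i, by omega⟩ :=
      ⟨Fin.mk_lt_mk.mpr (by omega), fun x h1 h2 => by
        rw [Fin.lt_def] at h1 h2; simp only at h1 h2; omega⟩
    refine mu_comp_perm fun k => ?_
    have := hf.le_perm_apply_iff hσ hcov (by rwa [Nat.sub_add_cancel (by omega)]) k
    simpa [Fin.le_def] using this

theorem stmt10_general (m : ℕ) (b : ℕ → ℝ)
    (hdec : ∀ i j, 1 ≤ i → i ≤ j → j ≤ m → b j ≤ b i)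
    (σ : Equiv.Perm (Fin m))
    (hσ : ∀ i : Fin m, b ((((σ⁻¹ : Equiv.Perm (Fin m)) i : Fin m) : ℕ) + 1)
      = b ((i : ℕ) + 1)) :
    act m σ (supervertexDec m b) = supervertexDec m b := by
  have hσ' (k : Fin m) : b ((σ k : ℕ) + 1) = b ((k : ℕ) + 1) := by
    simpa using (hσ (σ k)).symm
  funext lam
  simp only [act, supervertexDec]
  refine sum_congr rfl fun i _ => ?_
  rcases b'_eq_zero_or_mu_comp_perm (i := i) hdec hσ' with h | h
  · simp [h]
  · conv_lhs => rw [← h]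
    simp only [σ.surjective.right_cancellable]

/-- If b is decreasing with |b(i)| ≤ 1, and σ is a permutation of {1,…,m} with
σ_*(b) = b (i.e. b(σ^{−1}(i)) = b(i) for all i), then σ_*(q*) = q*. -/
theorem stmt10 (m : ℕ) (b : ℕ → ℝ) (hb : ∀ i ∈ Finset.Icc 1 m, |b i| ≤ 1)
    (hdec : ∀ i j, 1 ≤ i → i ≤ j → j ≤ m → b j ≤ b i)
    (σ : Equiv.Perm (Fin m))
    (hσ : ∀ i : Fin m, b ((((σ⁻¹ : Equiv.Perm (Fin m)) i : Fin m) : ℕ) + 1)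
      = b ((i : ℕ) + 1)) :
    act m σ (supervertexDec m b) = supervertexDec m b :=
  stmt10_general m b hdec σ hσ
end
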